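/- arXiv:2503.12305 — 4 statements merged into one kernel-verified Lean document; each statement's English description precedes it below -/
import Mathlib

section
/- Let T > 0; let m, Im, X_max ∈ ℝ; let c1 > 0, c2 ∈ ℝ, and set κ = 1/(1+c1). Let α, σ, M : ℝ → ℝ be functions of time. Suppose P1,…,P6 : ℝ → ℝ are differentiable on [0,T] and satisfy, for every t ∈ [0,T]: P1'(t) + c2 − κ·P1(t)^2 = 0; P2'(t) − α(t)·P2(t) − κ·P1(t)·P2(t) + 2κ·P1(t) = 0; P3'(t) + (1−κ) − (2α(t) + σ(t)^2)·P3(t) + κ·P2(t) − (κ/4)·P2(t)^2 = 0; P4'(t) + 2κ·(m − M(t))·P1(t) − κ·P1(t)·P4(t) = 0; P5'(t) + 2(1−κ)(m − M(t)) − α(t)·P5(t) + κ·P4(t) + κ(m − M(t))·P2(t) − (κ/2)·P2(t)·P4(t) + σ(t)^2·(X_max − 2m)·P3(t) = 0; P6'(t) + (1−κ)(m − M(t))^2 + κ(m − M(t))·P4(t) − (κ/4)·P4(t)^2 + σ(t)^2·m·(X_max − m)·P3(t) = 0. Define V̄(t,x,ι) = P1(t)(ι − Im)^2 + P2(t)(ι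 − Im)(x − m) + P3(t)(x − m)^2 + P4(t)(ι − Im) + P5(t)(x − m) + P6(t). Then V̄ is differentiable in t, twice differentiable in x, differentiable in ι, and for all t ∈ [0,T] and all x, ι ∈ ℝ: ∂_t V̄(t,x,ι) + (1−κ)(x − M(t))^2 + c2·(ι − Im)^2 − α(t)(x − m)·∂_x V̄(t,x,ι) + κ(x − M(t))·∂_ι V̄(t,x,ι) − (κ/4)·(∂_ι V̄(t,x,ι))^2 + (1/2)·σ(t)^2·x·(X_max − x)·∂_{xx} V̄(t,x,ι) = 0. -/
/-!
The ansatz is a quadratic polynomial in the shifted variables `x - m` and `ι - Im` with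
time-dependent coefficients, so `∂_x V̄` and `∂_ι V̄` are affine and `∂_xx V̄ = 2 P3`.
Substituting them, the left side of the PDE becomes a quadratic polynomial in `x - m` and
`ι - Im`, and the Riccati system says exactly that each of its six coefficients vanishes.
-/

lemma hasDerivAt_shifted_quadratic (a b c m y : ℝ) :
    HasDerivAt (fun y => a * (y - m) ^ 2 + b * (y - m) + c) (2 * a * (y - m) + b) y := by
  have hshift : HasDerivAt (fun y : ℝ => y - m) 1 y := (hasDerivAt_id y).sub_const m
  exact ((((hshift.fun_pow 2).const_mul a).fun_add (hshift.const_mul b)).add_const c).congr_deriv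
    (by ring)

lemma deriv_shifted_quadratic (a b c m : ℝ) :
    deriv (fun y => a * (y - m) ^ 2 + b * (y - m) + c) = fun y => 2 * a * (y - m) + b :=
  funext fun y => (hasDerivAt_shifted_quadratic a b c m y).deriv

lemma hasDerivAt_deriv_shifted_quadratic (a b c m y : ℝ) :
    HasDerivAt (deriv fun y => a * (y - m) ^ 2 + b * (y - m) + c) (2 * a) y := by
  rw [deriv_shifted_quadratic]
  simpa using hasDerivAt_shifted_quadratic 0 (2 * a) b m y

section QuadAnsatz

variable (m Im : ℝ) (P1 P2 P3 P4 P5 P6 : ℝ → ℝ)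

def quadAnsatz (t x ι : ℝ) : ℝ :=
  P1 t * (ι - Im) ^ 2 + P2 t * (ι - Im) * (x - m) + P3 t * (x - m) ^ 2 +
    P4 t * (ι - Im) + P5 t * (x - m) + P6 t

lemma quadAnsatz_fun_x_eq (t ι : ℝ) :
    (fun y => quadAnsatz m Im P1 P2 P3 P4 P5 P6 t y ι) = fun y =>
      P3 t * (y - m) ^ 2 + (P2 t * (ι - Im) + P5 t) * (y - m) +
        (P1 t * (ι - Im) ^ 2 + P4 t * (ι - Im) + P6 t) := by
  funext y
  simp only [quadAnsatz]
  ring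

lemma quadAnsatz_fun_ι_eq (t x : ℝ) :
    (fun j => quadAnsatz m Im P1 P2 P3 P4 P5 P6 t x j) = fun j =>
      P1 t * (j - Im) ^ 2 + (P2 t * (x - m) + P4 t) * (j - Im) +
        (P3 t * (x - m) ^ 2 + P5 t * (x - m) + P6 t) := by
  funext j
  simp only [quadAnsatz]
  ring

lemma hasDerivAt_quadAnsatz_x (t x ι : ℝ) :
    HasDerivAt (fun y => quadAnsatz m Im P1 P2 P3 P4 P5 P6 t y ι)
      (2 * P3 t * (x - m) + (P2 t * (ι - Im) + P5 t)) x := by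
  rw [quadAnsatz_fun_x_eq]
  exact hasDerivAt_shifted_quadratic _ _ _ _ _

lemma hasDerivAt_deriv_quadAnsatz_x (t x ι : ℝ) :
    HasDerivAt (deriv fun y => quadAnsatz m Im P1 P2 P3 P4 P5 P6 t y ι) (2 * P3 t) x := by
  rw [quadAnsatz_fun_x_eq]
  exact hasDerivAt_deriv_shifted_quadratic _ _ _ _ _

lemma hasDerivAt_quadAnsatz_ι (t x ι : ℝ) :
    HasDerivAt (fun j => quadAnsatz m Im P1 P2 P3 P4 P5 P6 t x j)
      (2 * P1 t * (ι - Im) + (P2 t * (x - m) + P4 t)) ι := by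
  rw [quadAnsatz_fun_ι_eq]
  exact hasDerivAt_shifted_quadratic _ _ _ _ _

variable {m Im P1 P2 P3 P4 P5 P6} in
lemma hasDerivAt_quadAnsatz_t {t Q1 Q2 Q3 Q4 Q5 Q6 : ℝ} (h1 : HasDerivAt P1 Q1 t)
    (h2 : HasDerivAt P2 Q2 t) (h3 : HasDerivAt P3 Q3 t) (h4 : HasDerivAt P4 Q4 t)
    (h5 : HasDerivAt P5 Q5 t) (h6 : HasDerivAt P6 Q6 t) (x ι : ℝ) :
    HasDerivAt (fun s => quadAnsatz m Im P1 P2 P3 P4 P5 P6 s x ι)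
      (Q1 * (ι - Im) ^ 2 + Q2 * (ι - Im) * (x - m) + Q3 * (x - m) ^ 2 +
        Q4 * (ι - Im) + Q5 * (x - m) + Q6) t :=
  (((((h1.mul_const _).add ((h2.mul_const _).mul_const _)).add (h3.mul_const _)).add
    (h4.mul_const _)).add (h5.mul_const _)).add h6

end QuadAnsatz

theorem ansatz_solves_reduced_HJB_general (T m Im Xmax c2 κ : ℝ)
    (α σ M : ℝ → ℝ) (P1 P2 P3 P4 P5 P6 : ℝ → ℝ)
    (h1 : ∀ t ∈ Set.Icc (0 : ℝ) T,
      HasDerivAt P1 (κ * P1 t ^ 2 - c2) t)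
    (h2 : ∀ t ∈ Set.Icc (0 : ℝ) T,
      HasDerivAt P2 (α t * P2 t + κ * P1 t * P2 t - 2 * κ * P1 t) t)
    (h3 : ∀ t ∈ Set.Icc (0 : ℝ) T,
      HasDerivAt P3 (-(1 - κ) + (2 * α t + σ t ^ 2) * P3 t - κ * P2 t + κ / 4 * P2 t ^ 2) t)
    (h4 : ∀ t ∈ Set.Icc (0 : ℝ) T,
      HasDerivAt P4 (-(2 * κ * (m - M t) * P1 t) + κ * P1 t * P4 t) t)
    (h5 : ∀ t ∈ Set.Icc (0 : ℝ) T,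
      HasDerivAt P5 (-(2 * (1 - κ) * (m - M t)) + α t * P5 t - κ * P4 t
        - κ * (m - M t) * P2 t + κ / 2 * P2 t * P4 t - σ t ^ 2 * (Xmax - 2 * m) * P3 t) t)
    (h6 : ∀ t ∈ Set.Icc (0 : ℝ) T,
      HasDerivAt P6 (-((1 - κ) * (m - M t) ^ 2) - κ * (m - M t) * P4 t + κ / 4 * P4 t ^ 2
        - σ t ^ 2 * m * (Xmax - m) * P3 t) t) :
    let V : ℝ → ℝ → ℝ → ℝ := fun t x ι =>
      P1 t * (ι - Im) ^ 2 + P2 t * (ι - Im) * (x - m) + P3 t * (x - m) ^ 2 +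
        P4 t * (ι - Im) + P5 t * (x - m) + P6 t
    ∀ t ∈ Set.Icc (0 : ℝ) T, ∀ x ι : ℝ,
      (DifferentiableAt ℝ (fun s => V s x ι) t ∧
        DifferentiableAt ℝ (fun y => V t y ι) x ∧
        DifferentiableAt ℝ (deriv fun y => V t y ι) x ∧
        DifferentiableAt ℝ (fun j => V t x j) ι) ∧
      deriv (fun s => V s x ι) t + (1 - κ) * (x - M t) ^ 2 + c2 * (ι - Im) ^ 2
        - α t * (x - m) * deriv (fun y => V t y ι) x
        + κ * (x - M t) * deriv (fun j => V t x j) ι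
        - κ / 4 * (deriv (fun j => V t x j) ι) ^ 2
        + 1 / 2 * σ t ^ 2 * x * (Xmax - x) * deriv (deriv fun y => V t y ι) x = 0 := by
  intro V t ht x ι
  have hVt : HasDerivAt (fun s => V s x ι) _ t := hasDerivAt_quadAnsatz_t
    (h1 t ht) (h2 t ht) (h3 t ht) (h4 t ht) (h5 t ht) (h6 t ht) x ι
  have hVx : HasDerivAt (fun y => V t y ι) _ x :=
    hasDerivAt_quadAnsatz_x m Im P1 P2 P3 P4 P5 P6 t x ι
  have hVxx : HasDerivAt (deriv fun y => V t y ι) _ x :=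
    hasDerivAt_deriv_quadAnsatz_x m Im P1 P2 P3 P4 P5 P6 t x ι
  have hVι : HasDerivAt (fun j => V t x j) _ ι :=
    hasDerivAt_quadAnsatz_ι m Im P1 P2 P3 P4 P5 P6 t x ι
  refine ⟨⟨hVt.differentiableAt, hVx.differentiableAt, hVxx.differentiableAt,
    hVι.differentiableAt⟩, ?_⟩
  rw [hVt.deriv, hVx.deriv, hVι.deriv, hVxx.deriv]
  -- The `σ²` terms of the `P5`, `P6` equations come from
  -- `x (Xmax - x) = -(x - m)² + (Xmax - 2m)(x - m) + m (Xmax - m)`.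
  ring

/-- Verification step of Proposition 1: if `P1,…,P6` solve the backward Riccati ODE
system on `[0,T]`, then the quadratic ansatz `V̄` is smooth in each variable and
satisfies the reduced semilinear HJB PDE. -/
theorem ansatz_solves_reduced_HJB (T m Im Xmax c1 c2 κ : ℝ) (hT : 0 < T)
    (hc1 : 0 < c1) (hκ : κ = 1 / (1 + c1))
    (α σ M : ℝ → ℝ) (P1 P2 P3 P4 P5 P6 : ℝ → ℝ)
    (h1 : ∀ t ∈ Set.Icc (0 : ℝ) T,
      HasDerivAt P1 (κ * P1 t ^ 2 - c2) t)
    (h2 : ∀ t ∈ Set.Icc (0 : ℝ) T,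
      HasDerivAt P2 (α t * P2 t + κ * P1 t * P2 t - 2 * κ * P1 t) t)
    (h3 : ∀ t ∈ Set.Icc (0 : ℝ) T,
      HasDerivAt P3 (-(1 - κ) + (2 * α t + σ t ^ 2) * P3 t - κ * P2 t + κ / 4 * P2 t ^ 2) t)
    (h4 : ∀ t ∈ Set.Icc (0 : ℝ) T,
      HasDerivAt P4 (-(2 * κ * (m - M t) * P1 t) + κ * P1 t * P4 t) t)
    (h5 : ∀ t ∈ Set.Icc (0 : ℝ) T,
      HasDerivAt P5 (-(2 * (1 - κ) * (m - M t)) + α t * P5 t - κ * P4 t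
        - κ * (m - M t) * P2 t + κ / 2 * P2 t * P4 t - σ t ^ 2 * (Xmax - 2 * m) * P3 t) t)
    (h6 : ∀ t ∈ Set.Icc (0 : ℝ) T,
      HasDerivAt P6 (-((1 - κ) * (m - M t) ^ 2) - κ * (m - M t) * P4 t + κ / 4 * P4 t ^ 2
        - σ t ^ 2 * m * (Xmax - m) * P3 t) t) :
    let V : ℝ → ℝ → ℝ → ℝ := fun t x ι =>
      P1 t * (ι - Im) ^ 2 + P2 t * (ι - Im) * (x - m) + P3 t * (x - m) ^ 2 +
        P4 t * (ι - Im) + P5 t * (x - m) + P6 t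
    ∀ t ∈ Set.Icc (0 : ℝ) T, ∀ x ι : ℝ,
      (DifferentiableAt ℝ (fun s => V s x ι) t ∧
        DifferentiableAt ℝ (fun y => V t y ι) x ∧
        DifferentiableAt ℝ (deriv fun y => V t y ι) x ∧
        DifferentiableAt ℝ (fun j => V t x j) ι) ∧
      deriv (fun s => V s x ι) t + (1 - κ) * (x - M t) ^ 2 + c2 * (ι - Im) ^ 2
        - α t * (x - m) * deriv (fun y => V t y ι) x
        + κ * (x - M t) * deriv (fun j => V t x j) ι
        - κ / 4 * (deriv (fun j => V t x j) ι) ^ 2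
        + 1 / 2 * σ t ^ 2 * x * (Xmax - x) * deriv (deriv fun y => V t y ι) x = 0 :=
  ansatz_solves_reduced_HJB_general T m Im Xmax c2 κ α σ M P1 P2 P3 P4 P5 P6 h1 h2 h3 h4 h5 h6
end

section
/- Under the hypotheses of the previous verification statement (T > 0; m, Im, X_max ∈ ℝ; c1 > 0; c2 ∈ ℝ; κ = 1/(1+c1); α, σ, M : ℝ → ℝ; P1,…,P6 differentiable on [0,T] solving the backward Riccati system with the P6 equation including the term σ(t)^2·m·(X_max − m)·P3(t); and V̄ the quadratic ansatz), the function V̄ satisfies the unconstrained Hamilton–Jacobi–Bellman equation: for all t ∈ [0,T] and x, ι ∈ ℝ, ∂_t V̄(t,x,ι) + inf_{b ∈ ℝ} { α(t)(m − x)·∂_x V̄(t,x,ι) + b·∂_ι V̄(t,x,ι) + (1/2)σ(t)^2·x·(X_max − x)·∂_{xx} V̄(t,x,ι) + (x − b − M(t))^2 + c1·b^2 + c2·(ι − Im)^2 } = 0, where the infimum over b ∈ ℝ is attained. -/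
/-!
The Hamiltonian is a strictly convex quadratic `(1 + c1) b² + β b + γ` in the control `b`,
so its infimum is attained and equals `γ - β² / (4 (1 + c1))`. For the quadratic ansatz the
HJB residual is then a polynomial in `ι - Im` and `x - m`; writing
`x (Xmax - x) = -(x - m)² + (Xmax - 2m)(x - m) + m (Xmax - m)`, its six coefficients are
exactly the six Riccati equations, with `κ = 1 / (1 + c1)`.
-/

theorem isLeast_range_quadratic {a : ℝ} (ha : 0 < a) (β γ : ℝ) {f : ℝ → ℝ}
    (hf : ∀ b, f b = a * b ^ 2 + β * b + γ) :
    IsLeast (Set.range f) (γ - β ^ 2 / (4 * a)) := by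
  have hsq : ∀ b, f b = a * (b + β / (2 * a)) ^ 2 + (γ - β ^ 2 / (4 * a)) := fun b => by
    rw [hf]
    field_simp
    ring
  refine ⟨⟨-(β / (2 * a)), by rw [hsq]; ring⟩, ?_⟩
  rintro _ ⟨b, rfl⟩
  rw [hsq]
  have : 0 ≤ a * (b + β / (2 * a)) ^ 2 := by positivity
  linarith

section QuadraticAnsatz

variable (m Im : ℝ) (P1 P2 P3 P4 P5 P6 : ℝ → ℝ)

def quadraticAnsatz (t x ι : ℝ) : ℝ :=
  P1 t * (ι - Im) ^ 2 + P2 t * (ι - Im) * (x - m) + P3 t * (x - m) ^ 2 +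
    P4 t * (ι - Im) + P5 t * (x - m) + P6 t

theorem hasDerivAt_quadraticAnsatz_state (t ι y : ℝ) :
    HasDerivAt (fun x => quadraticAnsatz m Im P1 P2 P3 P4 P5 P6 t x ι)
      (P2 t * (ι - Im) + 2 * P3 t * (y - m) + P5 t) y := by
  have h := (hasDerivAt_id' y).sub_const m
  have h' := (((((h.const_mul (P2 t * (ι - Im))).const_add (P1 t * (ι - Im) ^ 2)).add
    ((h.pow 2).const_mul (P3 t))).add_const (P4 t * (ι - Im))).add
    (h.const_mul (P5 t))).add_const (P6 t)
  exact h'.congr_deriv (by ring)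

theorem deriv_quadraticAnsatz_state (t ι : ℝ) :
    deriv (fun x => quadraticAnsatz m Im P1 P2 P3 P4 P5 P6 t x ι) =
      fun y => P2 t * (ι - Im) + 2 * P3 t * (y - m) + P5 t :=
  funext fun y => (hasDerivAt_quadraticAnsatz_state m Im P1 P2 P3 P4 P5 P6 t ι y).deriv

theorem deriv_deriv_quadraticAnsatz_state (t ι y : ℝ) :
    deriv (deriv fun x => quadraticAnsatz m Im P1 P2 P3 P4 P5 P6 t x ι) y = 2 * P3 t := by
  rw [deriv_quadraticAnsatz_state]
  have h := (((hasDerivAt_id' y).sub_const m).const_mul (2 * P3 t)).const_add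
    (P2 t * (ι - Im)) |>.add_const (P5 t)
  exact (h.congr_deriv (mul_one _)).deriv

theorem hasDerivAt_quadraticAnsatz_inventory (t x ι : ℝ) :
    HasDerivAt (fun j => quadraticAnsatz m Im P1 P2 P3 P4 P5 P6 t x j)
      (2 * P1 t * (ι - Im) + P2 t * (x - m) + P4 t) ι := by
  have h := (hasDerivAt_id' ι).sub_const Im
  have h' := ((((((h.pow 2).const_mul (P1 t)).add
    ((h.const_mul (P2 t)).mul_const (x - m))).add_const (P3 t * (x - m) ^ 2)).add
    (h.const_mul (P4 t))).add_const (P5 t * (x - m))).add_const (P6 t)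
  exact h'.congr_deriv (by ring)

theorem hasDerivAt_quadraticAnsatz_time {t x ι d1 d2 d3 d4 d5 d6 : ℝ}
    (h1 : HasDerivAt P1 d1 t) (h2 : HasDerivAt P2 d2 t) (h3 : HasDerivAt P3 d3 t)
    (h4 : HasDerivAt P4 d4 t) (h5 : HasDerivAt P5 d5 t) (h6 : HasDerivAt P6 d6 t) :
    HasDerivAt (fun s => quadraticAnsatz m Im P1 P2 P3 P4 P5 P6 s x ι)
      (d1 * (ι - Im) ^ 2 + d2 * (ι - Im) * (x - m) + d3 * (x - m) ^ 2 +
        d4 * (ι - Im) + d5 * (x - m) + d6) t :=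
  (((((h1.mul_const _).add ((h2.mul_const _).mul_const _)).add (h3.mul_const _)).add
    (h4.mul_const _)).add (h5.mul_const _)).add h6

end QuadraticAnsatz

theorem ansatz_solves_unconstrained_HJB_general (T m Im Xmax c1 c2 κ : ℝ)
    (hc1 : 0 < c1) (hκ : κ = 1 / (1 + c1))
    (α σ M : ℝ → ℝ) (P1 P2 P3 P4 P5 P6 : ℝ → ℝ)
    (h1 : ∀ t ∈ Set.Icc (0 : ℝ) T,
      HasDerivAt P1 (κ * P1 t ^ 2 - c2) t)
    (h2 : ∀ t ∈ Set.Icc (0 : ℝ) T,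
      HasDerivAt P2 (α t * P2 t + κ * P1 t * P2 t - 2 * κ * P1 t) t)
    (h3 : ∀ t ∈ Set.Icc (0 : ℝ) T,
      HasDerivAt P3 (-(1 - κ) + (2 * α t + σ t ^ 2) * P3 t - κ * P2 t + κ / 4 * P2 t ^ 2) t)
    (h4 : ∀ t ∈ Set.Icc (0 : ℝ) T,
      HasDerivAt P4 (-(2 * κ * (m - M t) * P1 t) + κ * P1 t * P4 t) t)
    (h5 : ∀ t ∈ Set.Icc (0 : ℝ) T,
      HasDerivAt P5 (-(2 * (1 - κ) * (m - M t)) + α t * P5 t - κ * P4 t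
        - κ * (m - M t) * P2 t + κ / 2 * P2 t * P4 t - σ t ^ 2 * (Xmax - 2 * m) * P3 t) t)
    (h6 : ∀ t ∈ Set.Icc (0 : ℝ) T,
      HasDerivAt P6 (-((1 - κ) * (m - M t) ^ 2) - κ * (m - M t) * P4 t + κ / 4 * P4 t ^ 2
        - σ t ^ 2 * m * (Xmax - m) * P3 t) t) :
    let V : ℝ → ℝ → ℝ → ℝ := fun t x ι =>
      P1 t * (ι - Im) ^ 2 + P2 t * (ι - Im) * (x - m) + P3 t * (x - m) ^ 2 +
        P4 t * (ι - Im) + P5 t * (x - m) + P6 t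
    ∀ t ∈ Set.Icc (0 : ℝ) T, ∀ x ι : ℝ,
      ∃ v : ℝ,
        IsLeast (Set.range fun b : ℝ =>
          α t * (m - x) * deriv (fun y => V t y ι) x
            + b * deriv (fun j => V t x j) ι
            + 1 / 2 * σ t ^ 2 * x * (Xmax - x) * deriv (deriv fun y => V t y ι) x
            + (x - b - M t) ^ 2 + c1 * b ^ 2 + c2 * (ι - Im) ^ 2) v ∧
        deriv (fun s => V s x ι) t + v = 0 := by
  intro V t ht x ι
  rw [show V = quadraticAnsatz m Im P1 P2 P3 P4 P5 P6 from rfl]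
  set Vx := deriv (fun y => quadraticAnsatz m Im P1 P2 P3 P4 P5 P6 t y ι) x
  set Vι := deriv (fun j => quadraticAnsatz m Im P1 P2 P3 P4 P5 P6 t x j) ι
  set Vxx := deriv (deriv fun y => quadraticAnsatz m Im P1 P2 P3 P4 P5 P6 t y ι) x
  refine ⟨_, isLeast_range_quadratic (a := 1 + c1) (by linarith) (Vι - 2 * (x - M t))
    (α t * (m - x) * Vx + 1 / 2 * σ t ^ 2 * x * (Xmax - x) * Vxx + (x - M t) ^ 2
      + c2 * (ι - Im) ^ 2) fun b => by ring, ?_⟩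
  simp only [Vx, Vι, Vxx]
  rw [(hasDerivAt_quadraticAnsatz_time m Im P1 P2 P3 P4 P5 P6 (h1 t ht) (h2 t ht) (h3 t ht)
    (h4 t ht) (h5 t ht) (h6 t ht)).deriv, (hasDerivAt_quadraticAnsatz_state ..).deriv,
    (hasDerivAt_quadraticAnsatz_inventory ..).deriv, deriv_deriv_quadraticAnsatz_state]
  have : 1 + c1 ≠ 0 := by linarith
  subst hκ
  field_simp
  ring

/-- Proposition 1 (PDE content): under the Riccati ODE hypotheses, the quadratic ansatz
`V̄` satisfies the unconstrained HJB equation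
`∂_t V̄ + inf_{b∈ℝ} {α(m−x)∂_x V̄ + b ∂_ι V̄ + ½σ²x(Xmax−x)∂_{xx}V̄ + (x−b−M)² + c1 b² + c2(ι−Im)²} = 0`,
the infimum over `b ∈ ℝ` being attained. -/
theorem ansatz_solves_unconstrained_HJB (T m Im Xmax c1 c2 κ : ℝ) (hT : 0 < T)
    (hc1 : 0 < c1) (hκ : κ = 1 / (1 + c1))
    (α σ M : ℝ → ℝ) (P1 P2 P3 P4 P5 P6 : ℝ → ℝ)
    (h1 : ∀ t ∈ Set.Icc (0 : ℝ) T,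
      HasDerivAt P1 (κ * P1 t ^ 2 - c2) t)
    (h2 : ∀ t ∈ Set.Icc (0 : ℝ) T,
      HasDerivAt P2 (α t * P2 t + κ * P1 t * P2 t - 2 * κ * P1 t) t)
    (h3 : ∀ t ∈ Set.Icc (0 : ℝ) T,
      HasDerivAt P3 (-(1 - κ) + (2 * α t + σ t ^ 2) * P3 t - κ * P2 t + κ / 4 * P2 t ^ 2) t)
    (h4 : ∀ t ∈ Set.Icc (0 : ℝ) T,
      HasDerivAt P4 (-(2 * κ * (m - M t) * P1 t) + κ * P1 t * P4 t) t)
    (h5 : ∀ t ∈ Set.Icc (0 : ℝ) T,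
      HasDerivAt P5 (-(2 * (1 - κ) * (m - M t)) + α t * P5 t - κ * P4 t
        - κ * (m - M t) * P2 t + κ / 2 * P2 t * P4 t - σ t ^ 2 * (Xmax - 2 * m) * P3 t) t)
    (h6 : ∀ t ∈ Set.Icc (0 : ℝ) T,
      HasDerivAt P6 (-((1 - κ) * (m - M t) ^ 2) - κ * (m - M t) * P4 t + κ / 4 * P4 t ^ 2
        - σ t ^ 2 * m * (Xmax - m) * P3 t) t) :
    let V : ℝ → ℝ → ℝ → ℝ := fun t x ι =>
      P1 t * (ι - Im) ^ 2 + P2 t * (ι - Im) * (x - m) + P3 t * (x - m) ^ 2 +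
        P4 t * (ι - Im) + P5 t * (x - m) + P6 t
    ∀ t ∈ Set.Icc (0 : ℝ) T, ∀ x ι : ℝ,
      ∃ v : ℝ,
        IsLeast (Set.range fun b : ℝ =>
          α t * (m - x) * deriv (fun y => V t y ι) x
            + b * deriv (fun j => V t x j) ι
            + 1 / 2 * σ t ^ 2 * x * (Xmax - x) * deriv (deriv fun y => V t y ι) x
            + (x - b - M t) ^ 2 + c1 * b ^ 2 + c2 * (ι - Im) ^ 2) v ∧
        deriv (fun s => V s x ι) t + v = 0 :=
  ansatz_solves_unconstrained_HJB_general T m Im Xmax c1 c2 κ hc1 hκ α σ M P1 P2 P3 P4 P5 P6 h1 h2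
    h3 h4 h5 h6
end

section
/- Let T > 0, κ > 0, c2 ≥ 0, and 𝒫 ≥ 0. Then there exists a unique differentiable function P1 : [0,T] → ℝ satisfying P1'(t) = κ·P1(t)^2 − c2 for all t ∈ [0,T] and P1(T) = 𝒫. Moreover, for all t ∈ [0,T], min(𝒫, √(c2/κ)) ≤ P1(t) ≤ max(𝒫, √(c2/κ)); in particular P1(t) ≥ 0 on [0,T]. -/
open Set Real

/-!
Writing `P = N / D`, the Riccati equation `P' = κ P² - c2` becomes the linear system
`N' = -c2 D`, `D' = -κ N`. With `a = √(c2/κ)` and `u = κ a (T - t)` it is solved by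
`N = a (Pen cosh u + a sinh u)`, `D = a cosh u + Pen sinh u` (and by `N = Pen`,
`D = 1 + κ Pen (T - t)` when `c2 = 0`), where `D > 0` for `t ≤ T`. Then `P - a` is a
nonnegative multiple of `Pen - a` and `P - Pen` one of `a - Pen`, so `P` stays between `Pen`
and `a`. Uniqueness holds because the right-hand side is locally Lipschitz and both solutions
stay in a compact set.
-/

theorem eqOn_Icc_of_hasDerivAt_of_locallyLipschitz {E : Type*} [NormedAddCommGroup E]
    [NormedSpace ℝ E] {v : E → E} (hv : LocallyLipschitz v) {f g : ℝ → E} {a b : ℝ}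
    (hf : ∀ t ∈ Icc a b, HasDerivAt f (v (f t)) t)
    (hg : ∀ t ∈ Icc a b, HasDerivAt g (v (g t)) t) (hb : f b = g b) :
    EqOn f g (Icc a b) := by
  have hfc : ContinuousOn f (Icc a b) := fun t ht => (hf t ht).continuousAt.continuousWithinAt
  have hgc : ContinuousOn g (Icc a b) := fun t ht => (hg t ht).continuousAt.continuousWithinAt
  set s := f '' Icc a b ∪ g '' Icc a b
  have hs : IsCompact s := (isCompact_Icc.image_of_continuousOn hfc).union
    (isCompact_Icc.image_of_continuousOn hgc)
  obtain ⟨K, hK⟩ := (hv.locallyLipschitzOn (s := s)).exists_lipschitzOnWith_of_compact hs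
  exact ODE_solution_unique_of_mem_Icc_left (v := fun _ => v) (s := fun _ => s) (fun _ _ => hK)
    hfc (fun t ht => (hf t (Ioc_subset_Icc_self ht)).hasDerivWithinAt)
    (fun t ht => Or.inl (mem_image_of_mem f (Ioc_subset_Icc_self ht)))
    hgc (fun t ht => (hg t (Ioc_subset_Icc_self ht)).hasDerivWithinAt)
    (fun t ht => Or.inr (mem_image_of_mem g (Ioc_subset_Icc_self ht))) hb

theorem HasDerivAt.div_of_riccati_linearization {𝕜 : Type*} [NontriviallyNormedField 𝕜]
    {N D : 𝕜 → 𝕜} {k c t : 𝕜} (hN : HasDerivAt N (-(c * D t)) t)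
    (hD : HasDerivAt D (-(k * N t)) t) (hDt : D t ≠ 0) :
    HasDerivAt (fun s => N s / D s) (k * (N t / D t) ^ 2 - c) t :=
  (hN.div hD hDt).congr_deriv (by field_simp; ring)

theorem mem_uIcc_of_sub_eq_mul {x a b l m : ℝ} (hl : 0 ≤ l) (hm : 0 ≤ m)
    (ha : x - a = l * (b - a)) (hb : x - b = m * (a - b)) : x ∈ uIcc a b := by
  rcases le_total a b with hab | hab
  · rw [uIcc_of_le hab]
    constructor <;> nlinarith
  · rw [uIcc_of_ge hab]
    constructor <;> nlinarith

theorem exists_riccati_solution_of_zero_source {κ Pen : ℝ} (T : ℝ) (hκ : 0 ≤ κ)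
    (hPen : 0 ≤ Pen) :
    ∃ P : ℝ → ℝ, (∀ t ≤ T, HasDerivAt P (κ * P t ^ 2) t) ∧ P T = Pen ∧
      ∀ t ≤ T, P t ∈ uIcc Pen 0 := by
  set D : ℝ → ℝ := fun t => 1 + κ * Pen * (T - t)
  have hD : ∀ t, HasDerivAt D (-(κ * Pen)) t := fun t =>
    ((((hasDerivAt_id t).const_sub T).const_mul (κ * Pen)).const_add 1).congr_deriv (by simp)
  have hDpos : ∀ t ≤ T, 0 < D t := fun t ht => by
    have : 0 ≤ κ * Pen * (T - t) := by have := sub_nonneg.2 ht; positivity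
    simp only [D]; linarith
  refine ⟨fun t => Pen / D t, fun t ht => ?_, by simp [D], fun t ht => ?_⟩
  · exact (((hasDerivAt_const t Pen).congr_deriv (by ring)).div_of_riccati_linearization
      (hD t) (hDpos t ht).ne').congr_deriv (sub_zero _)
  · have hDt := (hDpos t ht).ne'
    refine mem_uIcc_of_sub_eq_mul (l := κ * Pen * (T - t) / D t) (m := 1 / D t) ?_ ?_ ?_ ?_
    · have := sub_nonneg.2 ht; have := hDpos t ht; positivity
    · exact (one_div_pos.2 (hDpos t ht)).le
    · field_simp; simp only [D]; ring
    · field_simp; ring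

theorem exists_riccati_solution_of_pos_equilibrium {κ a Pen : ℝ} (T : ℝ) (hκ : 0 ≤ κ)
    (ha : 0 < a) (hPen : 0 ≤ Pen) :
    ∃ P : ℝ → ℝ, (∀ t ≤ T, HasDerivAt P (κ * P t ^ 2 - κ * a ^ 2) t) ∧ P T = Pen ∧
      ∀ t ≤ T, P t ∈ uIcc Pen a := by
  set u : ℝ → ℝ := fun t => κ * a * (T - t)
  have hu : ∀ t, HasDerivAt u (-(κ * a)) t := fun t => by
    simpa using ((hasDerivAt_id t).const_sub T).const_mul (κ * a)
  have hu0 : ∀ t ≤ T, 0 ≤ u t := fun t ht => by have := sub_nonneg.2 ht; positivity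
  set N : ℝ → ℝ := fun t => a * (Pen * cosh (u t) + a * sinh (u t))
  set D : ℝ → ℝ := fun t => a * cosh (u t) + Pen * sinh (u t)
  have hN : ∀ t, HasDerivAt N (-(κ * a ^ 2 * D t)) t := fun t =>
    (((((hu t).cosh).const_mul Pen).add (((hu t).sinh).const_mul a)).const_mul a).congr_deriv
      (by simp only [D]; ring)
  have hD : ∀ t, HasDerivAt D (-(κ * N t)) t := fun t =>
    ((((hu t).cosh).const_mul a).add (((hu t).sinh).const_mul Pen)).congr_deriv
      (by simp only [N]; ring)
  have hDpos : ∀ t ≤ T, 0 < D t := fun t ht => by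
    have := one_le_cosh (u t)
    have := sinh_nonneg_iff.2 (hu0 t ht)
    simp only [D]; nlinarith
  refine ⟨fun t => N t / D t, fun t ht => (hN t).div_of_riccati_linearization (hD t)
    (hDpos t ht).ne', by simp [N, D, u]; field_simp, fun t ht => ?_⟩
  have hDt := (hDpos t ht).ne'
  refine mem_uIcc_of_sub_eq_mul (l := (a + Pen) * sinh (u t) / D t)
    (m := a * (cosh (u t) - sinh (u t)) / D t) ?_ ?_ ?_ ?_
  · have := sinh_nonneg_iff.2 (hu0 t ht); have := hDpos t ht; positivity
  · have := hDpos t ht; rw [cosh_sub_sinh]; positivity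
  · field_simp; simp only [N, D]; ring
  · field_simp; simp only [N, D]; ring

theorem exists_riccati_solution {κ c2 Pen : ℝ} (T : ℝ) (hκ : 0 < κ) (hc2 : 0 ≤ c2)
    (hPen : 0 ≤ Pen) :
    ∃ P : ℝ → ℝ, (∀ t ≤ T, HasDerivAt P (κ * P t ^ 2 - c2) t) ∧ P T = Pen ∧
      ∀ t ≤ T, P t ∈ uIcc Pen √(c2 / κ) := by
  rcases hc2.eq_or_lt with rfl | hc2
  · simpa using exists_riccati_solution_of_zero_source T hκ.le hPen
  · have hc2_eq : κ * √(c2 / κ) ^ 2 = c2 := by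
      rw [sq_sqrt (div_pos hc2 hκ).le]; field_simp
    simpa only [hc2_eq] using
      exists_riccati_solution_of_pos_equilibrium T hκ.le (sqrt_pos.2 (div_pos hc2 hκ)) hPen

theorem riccati_P1_exists_unique_bounded_general (T κ c2 Pen : ℝ)
    (hκ : 0 < κ) (hc2 : 0 ≤ c2) (hPen : 0 ≤ Pen) :
    ∃ P1 : ℝ → ℝ,
      (∀ t ∈ Set.Icc (0 : ℝ) T, HasDerivAt P1 (κ * P1 t ^ 2 - c2) t) ∧
      P1 T = Pen ∧
      (∀ t ∈ Set.Icc (0 : ℝ) T,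
        min Pen (Real.sqrt (c2 / κ)) ≤ P1 t ∧ P1 t ≤ max Pen (Real.sqrt (c2 / κ))) ∧
      (∀ t ∈ Set.Icc (0 : ℝ) T, 0 ≤ P1 t) ∧
      (∀ Q : ℝ → ℝ,
        (∀ t ∈ Set.Icc (0 : ℝ) T, HasDerivAt Q (κ * Q t ^ 2 - c2) t) → Q T = Pen →
        ∀ t ∈ Set.Icc (0 : ℝ) T, Q t = P1 t) := by
  obtain ⟨P, hP, hPT, hPbd⟩ := exists_riccati_solution T hκ hc2 hPen
  have hP0 : ∀ t ≤ T, 0 ≤ P t := fun t ht => (le_min hPen (sqrt_nonneg _)).trans (hPbd t ht).1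
  have hv : LocallyLipschitz fun x : ℝ => κ * x ^ 2 - c2 :=
    (show ContDiff ℝ 1 fun x : ℝ => κ * x ^ 2 - c2 by fun_prop).locallyLipschitz
  refine ⟨P, fun t ht => hP t ht.2, hPT, fun t ht => hPbd t ht.2, fun t ht => hP0 t ht.2,
    fun Q hQ hQT => ?_⟩
  exact eqOn_Icc_of_hasDerivAt_of_locallyLipschitz hv hQ (fun t ht => hP t ht.2)
    (hQT.trans hPT.symm)

/-- The scalar terminal-value Riccati problem `P1' = κ·P1² − c2`, `P1(T) = 𝒫` (with
`κ > 0`, `c2 ≥ 0`, `𝒫 ≥ 0`, denoted `Pen`) has a unique solution on `[0,T]`, which stays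
between `min(𝒫, √(c2/κ))` and `max(𝒫, √(c2/κ))`; in particular it is nonnegative. -/
theorem riccati_P1_exists_unique_bounded (T κ c2 Pen : ℝ)
    (hT : 0 < T) (hκ : 0 < κ) (hc2 : 0 ≤ c2) (hPen : 0 ≤ Pen) :
    ∃ P1 : ℝ → ℝ,
      (∀ t ∈ Set.Icc (0 : ℝ) T, HasDerivAt P1 (κ * P1 t ^ 2 - c2) t) ∧
      P1 T = Pen ∧
      (∀ t ∈ Set.Icc (0 : ℝ) T,
        min Pen (Real.sqrt (c2 / κ)) ≤ P1 t ∧ P1 t ≤ max Pen (Real.sqrt (c2 / κ))) ∧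
      (∀ t ∈ Set.Icc (0 : ℝ) T, 0 ≤ P1 t) ∧
      (∀ Q : ℝ → ℝ,
        (∀ t ∈ Set.Icc (0 : ℝ) T, HasDerivAt Q (κ * Q t ^ 2 - c2) t) → Q T = Pen →
        ∀ t ∈ Set.Icc (0 : ℝ) T, Q t = P1 t) :=
  riccati_P1_exists_unique_bounded_general T κ c2 Pen hκ hc2 hPen
end

section
/- Let T > 0, c1 > 0, κ = 1/(1+c1), c2 ≥ 0, 𝒫 ≥ 0, and fix m, Im, ι_target, X_max ∈ ℝ. Let α, σ, M : [0,T] → ℝ be continuous. Then the backward system of ODEs on [0,T] — P1' + c2 − κP1^2 = 0 with P1(T) = 𝒫; P2' − αP2 − κP1P2 + 2κP1 = 0 with P2(T) = 0; P3' + (1−κ) − (2α + σ^2)P3 + κP2 − (κ/4)P2^2 = 0 with P3(T) = 0; P4' + 2κ(m − M)P1 − κP1P4 = 0 with P4(T) = 2𝒫(Im − ι_target); P5' + 2(1−κ)(m − M) − αP5 + κP4 + κ(m − M)P2 − (κ/2)P2P4 + σ^2(X_max − 2m)P3 = 0 with P5(T) = 0; P6' + (1−κ)(m − M)^2 + κ(m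 − M)P4 − (κ/4)P4^2 + σ^2·m·(X_max − m)·P3 = 0 with P6(T) = 𝒫(Im − ι_target)^2 — admits a unique continuously differentiable solution (P1,…,P6) on all of [0,T]. -/
/-!
The only nonlinear equation is the scalar Riccati equation for `P1`. The substitution
`P1 = -D' / (κ D)` linearises it to `D'' = κ c2 D` with `D T = 1`, `D' T = -κ 𝒫`; the solution
(`cosh`/`sinh`, or affine when `c2 = 0`) stays positive for `t ≤ T` because `c2, 𝒫 ≥ 0`, so `P1`
exists on all of `[0, T]`. Given the earlier components, each of `P2, …, P6` solves a linear ODE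
with coefficients continuous on `[0, T]`, solved by variation of constants. For uniqueness, once
the earlier components agree, the difference of two solutions of the next equation solves a
homogeneous linear ODE with zero terminal value (for `P1` with coefficient `κ (P1 + Q1)`), so it
vanishes by Grönwall.
-/

/-- The backward Riccati ODE system of Proposition 1 (with terminal penalty weight
`Pen = 𝒫` and terminal SoC target `ιt`). Solutions are automatically continuously
differentiable since the right-hand sides are continuous. -/
def RiccatiSystem (T m Im ιt Xmax κ c2 Pen : ℝ) (α σ M : ℝ → ℝ)
    (P1 P2 P3 P4 P5 P6 : ℝ → ℝ) : Prop :=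
  (∀ t ∈ Set.Icc (0 : ℝ) T, HasDerivAt P1 (κ * P1 t ^ 2 - c2) t) ∧ P1 T = Pen ∧
  (∀ t ∈ Set.Icc (0 : ℝ) T,
    HasDerivAt P2 (α t * P2 t + κ * P1 t * P2 t - 2 * κ * P1 t) t) ∧ P2 T = 0 ∧
  (∀ t ∈ Set.Icc (0 : ℝ) T,
    HasDerivAt P3 (-(1 - κ) + (2 * α t + σ t ^ 2) * P3 t - κ * P2 t + κ / 4 * P2 t ^ 2) t) ∧
  P3 T = 0 ∧
  (∀ t ∈ Set.Icc (0 : ℝ) T,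
    HasDerivAt P4 (-(2 * κ * (m - M t) * P1 t) + κ * P1 t * P4 t) t) ∧
  P4 T = 2 * Pen * (Im - ιt) ∧
  (∀ t ∈ Set.Icc (0 : ℝ) T,
    HasDerivAt P5 (-(2 * (1 - κ) * (m - M t)) + α t * P5 t - κ * P4 t
      - κ * (m - M t) * P2 t + κ / 2 * P2 t * P4 t - σ t ^ 2 * (Xmax - 2 * m) * P3 t) t) ∧
  P5 T = 0 ∧
  (∀ t ∈ Set.Icc (0 : ℝ) T,
    HasDerivAt P6 (-((1 - κ) * (m - M t) ^ 2) - κ * (m - M t) * P4 t + κ / 4 * P4 t ^ 2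
      - σ t ^ 2 * m * (Xmax - m) * P3 t) t) ∧
  P6 T = Pen * (Im - ιt) ^ 2

open Set

theorem ContinuousOn.exists_continuous_eqOn_Icc {α β : Type*} [LinearOrder α]
    [TopologicalSpace α] [OrderTopology α] [TopologicalSpace β] {a b : α} (hab : a ≤ b) {f : α → β}
    (hf : ContinuousOn f (Icc a b)) : ∃ g : α → β, Continuous g ∧ EqOn g f (Icc a b) :=
  ⟨IccExtend hab ((Icc a b).domRestrict f), continuous_IccExtend_iff.2 hf.domRestrict,
    fun _ hx => IccExtend_of_mem hab _ hx⟩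

theorem exists_hasDerivAt_linear {p q : ℝ → ℝ} (hp : Continuous p) (hq : Continuous q)
    (t₀ y₀ : ℝ) : ∃ y : ℝ → ℝ, (∀ t, HasDerivAt y (p t * y t + q t) t) ∧ y t₀ = y₀ := by
  set A : ℝ → ℝ := fun t => ∫ s in t₀..t, p s
  have hA : ∀ t, HasDerivAt A (p t) t := fun t =>
    (hp.integral_hasStrictDerivAt t₀ t).hasDerivAt
  have hA_cont : Continuous A := continuous_iff_continuousAt.2 fun t => (hA t).continuousAt
  have hI : Continuous fun s => Real.exp (-A s) * q s := by fun_prop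
  refine ⟨fun t => Real.exp (A t) * (y₀ + ∫ s in t₀..t, Real.exp (-A s) * q s), fun t => ?_,
    by simp [A]⟩
  have hJ := (hI.integral_hasStrictDerivAt t₀ t).hasDerivAt.const_add y₀
  refine ((hA t).exp.mul hJ).congr_deriv ?_
  rw [Real.exp_neg]
  field_simp

theorem exists_hasDerivAt_linear_Icc {a b : ℝ} (hab : a ≤ b) {p q : ℝ → ℝ}
    (hp : ContinuousOn p (Icc a b)) (hq : ContinuousOn q (Icc a b)) (t₀ y₀ : ℝ) :
    ∃ y : ℝ → ℝ, (∀ t ∈ Icc a b, HasDerivAt y (p t * y t + q t) t) ∧ y t₀ = y₀ := by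
  obtain ⟨p', hp', hpp'⟩ := hp.exists_continuous_eqOn_Icc hab
  obtain ⟨q', hq', hqq'⟩ := hq.exists_continuous_eqOn_Icc hab
  obtain ⟨y, hy, hy₀⟩ := exists_hasDerivAt_linear hp' hq' t₀ y₀
  exact ⟨y, fun t ht => hpp' ht ▸ hqq' ht ▸ hy t, hy₀⟩

theorem eqOn_Icc_of_hasDerivAt_sub_eq_mul {a b : ℝ} {f g f' g' k : ℝ → ℝ}
    (hk : ContinuousOn k (Icc a b))
    (hf : ∀ t ∈ Icc a b, HasDerivAt f (f' t) t) (hg : ∀ t ∈ Icc a b, HasDerivAt g (g' t) t)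
    (hfg : ∀ t ∈ Icc a b, f' t - g' t = k t * (f t - g t)) (hb : f b = g b) :
    EqOn f g (Icc a b) := by
  obtain ⟨K, hK⟩ := isCompact_Icc.exists_bound_of_continuousOn hk
  have hLip : ∀ t ∈ Ioc a b, LipschitzOnWith K.toNNReal (fun y => k t * y) univ := fun t ht =>
    (LipschitzWith.of_dist_le_mul fun x y => by
      rw [Real.dist_eq, Real.dist_eq, ← mul_sub, abs_mul]
      gcongr
      exact (hK t (Ioc_subset_Icc_self ht)).trans (le_max_left _ _)).lipschitzOnWith
  have hd : ∀ t ∈ Ioc a b, HasDerivWithinAt (f - g) (k t * (f - g) t) (Iic t) t :=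
    fun t ht => by
      have ht' := Ioc_subset_Icc_self ht
      rw [Pi.sub_apply, ← hfg t ht']
      exact ((hf t ht').sub (hg t ht')).hasDerivWithinAt
  have hcont : ContinuousOn (f - g) (Icc a b) :=
    HasDerivAt.continuousOn fun t ht => (hf t ht).sub (hg t ht)
  intro t ht
  have := ODE_solution_unique_of_mem_Icc_left (g := fun _ => 0) hLip hcont hd
    (fun _ _ => mem_univ _) continuousOn_const
    (fun t _ => by simpa using hasDerivWithinAt_const t _ (0 : ℝ))
    (fun _ _ => mem_univ _) (by simp [hb]) ht
  simpa [sub_eq_zero] using this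

theorem hasDerivAt_riccati_of_second_order {κ c t : ℝ} {D D' : ℝ → ℝ}
    (hD : HasDerivAt D (D' t) t) (hD' : HasDerivAt D' (κ * c * D t) t) (hκ : κ ≠ 0)
    (hDt : D t ≠ 0) :
    HasDerivAt (fun s => -D' s / (κ * D s)) (κ * (-D' t / (κ * D t)) ^ 2 - c) t := by
  refine (hD'.neg.div (hD.const_mul κ) (mul_ne_zero hκ hDt)).congr_deriv ?_
  rw [Pi.neg_apply]
  field_simp
  ring

theorem exists_second_order_solution_pos_Iic {ω q : ℝ} (hω : 0 ≤ ω) (hq : 0 ≤ q) (T : ℝ) :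
    ∃ D D' : ℝ → ℝ, (∀ t, HasDerivAt D (D' t) t) ∧ (∀ t, HasDerivAt D' (ω * D t) t) ∧
      (∀ t ≤ T, 0 < D t) ∧ D T = 1 ∧ D' T = -q := by
  rcases hω.eq_or_lt with rfl | hω
  · refine ⟨fun t => 1 + q * (T - t), fun _ => -q, fun t => ?_,
      fun t => by simpa using hasDerivAt_const t (-q), fun t ht => ?_, by simp, rfl⟩
    · simpa using (((hasDerivAt_id t).const_sub T).const_mul q).const_add 1
    · have : 0 ≤ q * (T - t) := mul_nonneg hq (by linarith)
      linarith
  · set l := √ω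
    have hl : 0 < l := Real.sqrt_pos.2 hω
    have hθ : ∀ t, HasDerivAt (fun s => l * (T - s)) (-l) t := fun t => by
      simpa using ((hasDerivAt_id t).const_sub T).const_mul l
    refine ⟨fun t => Real.cosh (l * (T - t)) + q / l * Real.sinh (l * (T - t)),
      fun t => -(l * Real.sinh (l * (T - t)) + q * Real.cosh (l * (T - t))),
      fun t => ?_, fun t => ?_, fun t ht => ?_, by simp, by simp⟩
    · refine ((hθ t).cosh.add ((hθ t).sinh.const_mul _)).congr_deriv ?_
      field_simp
      ring
    · refine (((hθ t).sinh.const_mul l).add ((hθ t).cosh.const_mul _)).neg.congr_deriv ?_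
      rw [← Real.sq_sqrt hω.le]
      field_simp
      ring
    · have : 0 ≤ Real.sinh (l * (T - t)) := Real.sinh_nonneg_iff.2 (by nlinarith)
      have := Real.one_le_cosh (l * (T - t))
      positivity

theorem exists_hasDerivAt_riccati {κ c p : ℝ} (hκ : 0 < κ) (hc : 0 ≤ c) (hp : 0 ≤ p) (T : ℝ) :
    ∃ P : ℝ → ℝ, (∀ t ≤ T, HasDerivAt P (κ * P t ^ 2 - c) t) ∧ P T = p := by
  obtain ⟨D, D', hD, hD', hDpos, hDT, hD'T⟩ :=
    exists_second_order_solution_pos_Iic (mul_nonneg hκ.le hc) (mul_nonneg hκ.le hp) T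
  refine ⟨fun s => -D' s / (κ * D s), fun t ht => hasDerivAt_riccati_of_second_order
    (hD t) (hD' t) hκ.ne' (hDpos t ht).ne', ?_⟩
  simp only [hDT, hD'T]
  field_simp

theorem exists_riccatiSystem {T κ c2 Pen : ℝ} (m Im ιt Xmax : ℝ) (hT : 0 ≤ T) (hκ : 0 < κ)
    (hc2 : 0 ≤ c2) (hPen : 0 ≤ Pen) {α σ M : ℝ → ℝ} (hα : ContinuousOn α (Icc 0 T))
    (hσ : ContinuousOn σ (Icc 0 T)) (hM : ContinuousOn M (Icc 0 T)) :
    ∃ P1 P2 P3 P4 P5 P6 : ℝ → ℝ,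
      RiccatiSystem T m Im ιt Xmax κ c2 Pen α σ M P1 P2 P3 P4 P5 P6 := by
  obtain ⟨P1, hP1, hP1T⟩ := exists_hasDerivAt_riccati hκ hc2 hPen T
  have hP1c : ContinuousOn P1 (Icc 0 T) := HasDerivAt.continuousOn fun t ht => hP1 t ht.2
  obtain ⟨P2, hP2, hP2T⟩ := exists_hasDerivAt_linear_Icc hT
    (p := fun t => α t + κ * P1 t) (q := fun t => -(2 * κ * P1 t)) (by fun_prop) (by fun_prop)
    T 0
  have hP2c : ContinuousOn P2 (Icc 0 T) := HasDerivAt.continuousOn hP2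
  obtain ⟨P3, hP3, hP3T⟩ := exists_hasDerivAt_linear_Icc hT
    (p := fun t => 2 * α t + σ t ^ 2) (q := fun t => -(1 - κ) - κ * P2 t + κ / 4 * P2 t ^ 2)
    (by fun_prop) (by fun_prop) T 0
  have hP3c : ContinuousOn P3 (Icc 0 T) := HasDerivAt.continuousOn hP3
  obtain ⟨P4, hP4, hP4T⟩ := exists_hasDerivAt_linear_Icc hT
    (p := fun t => κ * P1 t) (q := fun t => -(2 * κ * (m - M t) * P1 t)) (by fun_prop)
    (by fun_prop) T (2 * Pen * (Im - ιt))
  have hP4c : ContinuousOn P4 (Icc 0 T) := HasDerivAt.continuousOn hP4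
  obtain ⟨P5, hP5, hP5T⟩ := exists_hasDerivAt_linear_Icc hT (p := α)
    (q := fun t => -(2 * (1 - κ) * (m - M t)) - κ * P4 t - κ * (m - M t) * P2 t
      + κ / 2 * P2 t * P4 t - σ t ^ 2 * (Xmax - 2 * m) * P3 t) hα (by fun_prop) T 0
  obtain ⟨P6, hP6, hP6T⟩ := exists_hasDerivAt_linear_Icc hT (p := fun _ => 0)
    (q := fun t => -((1 - κ) * (m - M t) ^ 2) - κ * (m - M t) * P4 t + κ / 4 * P4 t ^ 2
      - σ t ^ 2 * m * (Xmax - m) * P3 t) continuousOn_const (by fun_prop)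
    T (Pen * (Im - ιt) ^ 2)
  exact ⟨P1, P2, P3, P4, P5, P6, fun t ht => hP1 t ht.2, hP1T,
    fun t ht => (hP2 t ht).congr_deriv (by ring), hP2T,
    fun t ht => (hP3 t ht).congr_deriv (by ring), hP3T,
    fun t ht => (hP4 t ht).congr_deriv (by ring), hP4T,
    fun t ht => (hP5 t ht).congr_deriv (by ring), hP5T,
    fun t ht => (hP6 t ht).congr_deriv (by ring), hP6T⟩

theorem RiccatiSystem.unique {T m Im ιt Xmax κ c2 Pen : ℝ} {α σ M : ℝ → ℝ}
    {P1 P2 P3 P4 P5 P6 Q1 Q2 Q3 Q4 Q5 Q6 : ℝ → ℝ}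
    (hα : ContinuousOn α (Icc 0 T)) (hσ : ContinuousOn σ (Icc 0 T))
    (hP : RiccatiSystem T m Im ιt Xmax κ c2 Pen α σ M P1 P2 P3 P4 P5 P6)
    (hQ : RiccatiSystem T m Im ιt Xmax κ c2 Pen α σ M Q1 Q2 Q3 Q4 Q5 Q6) :
    ∀ t ∈ Icc (0 : ℝ) T,
      P1 t = Q1 t ∧ P2 t = Q2 t ∧ P3 t = Q3 t ∧ P4 t = Q4 t ∧ P5 t = Q5 t ∧ P6 t = Q6 t := by
  obtain ⟨hP1, hP1T, hP2, hP2T, hP3, hP3T, hP4, hP4T, hP5, hP5T, hP6, hP6T⟩ := hP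
  obtain ⟨hQ1, hQ1T, hQ2, hQ2T, hQ3, hQ3T, hQ4, hQ4T, hQ5, hQ5T, hQ6, hQ6T⟩ := hQ
  have hP1c := HasDerivAt.continuousOn hP1
  have hQ1c := HasDerivAt.continuousOn hQ1
  have e1 : EqOn P1 Q1 (Icc 0 T) := eqOn_Icc_of_hasDerivAt_sub_eq_mul
    (k := fun t => κ * (P1 t + Q1 t)) (by fun_prop) hP1 hQ1 (fun t _ => by ring)
    (hP1T.trans hQ1T.symm)
  have e2 : EqOn P2 Q2 (Icc 0 T) := eqOn_Icc_of_hasDerivAt_sub_eq_mul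
    (k := fun t => α t + κ * P1 t) (by fun_prop) hP2 hQ2 (fun t ht => by rw [e1 ht]; ring)
    (hP2T.trans hQ2T.symm)
  have e3 : EqOn P3 Q3 (Icc 0 T) := eqOn_Icc_of_hasDerivAt_sub_eq_mul
    (k := fun t => 2 * α t + σ t ^ 2) (by fun_prop) hP3 hQ3 (fun t ht => by rw [e2 ht]; ring)
    (hP3T.trans hQ3T.symm)
  have e4 : EqOn P4 Q4 (Icc 0 T) := eqOn_Icc_of_hasDerivAt_sub_eq_mul
    (k := fun t => κ * P1 t) (by fun_prop) hP4 hQ4 (fun t ht => by rw [e1 ht]; ring)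
    (hP4T.trans hQ4T.symm)
  have e5 : EqOn P5 Q5 (Icc 0 T) := eqOn_Icc_of_hasDerivAt_sub_eq_mul hα hP5 hQ5
    (fun t ht => by rw [e2 ht, e3 ht, e4 ht]; ring) (hP5T.trans hQ5T.symm)
  have e6 : EqOn P6 Q6 (Icc 0 T) := eqOn_Icc_of_hasDerivAt_sub_eq_mul (k := fun _ => 0)
    continuousOn_const hP6 hQ6 (fun t ht => by rw [e3 ht, e4 ht]; ring)
    (hP6T.trans hQ6T.symm)
  exact fun t ht => ⟨e1 ht, e2 ht, e3 ht, e4 ht, e5 ht, e6 ht⟩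

/-- Resolvability of the backward Riccati system of Proposition 1: for continuous
coefficients `α, σ, M` the system admits a unique (continuously differentiable)
solution `(P1,…,P6)` on all of `[0,T]`. -/
theorem riccati_system_exists_unique (T c1 κ c2 Pen m Im ιt Xmax : ℝ)
    (hT : 0 < T) (hc1 : 0 < c1) (hκ : κ = 1 / (1 + c1)) (hc2 : 0 ≤ c2) (hPen : 0 ≤ Pen)
    (α σ M : ℝ → ℝ)
    (hα : ContinuousOn α (Set.Icc 0 T)) (hσ : ContinuousOn σ (Set.Icc 0 T))
    (hM : ContinuousOn M (Set.Icc 0 T)) :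
    ∃ P1 P2 P3 P4 P5 P6 : ℝ → ℝ,
      RiccatiSystem T m Im ιt Xmax κ c2 Pen α σ M P1 P2 P3 P4 P5 P6 ∧
      ∀ Q1 Q2 Q3 Q4 Q5 Q6 : ℝ → ℝ,
        RiccatiSystem T m Im ιt Xmax κ c2 Pen α σ M Q1 Q2 Q3 Q4 Q5 Q6 →
        ∀ t ∈ Set.Icc (0 : ℝ) T,
          Q1 t = P1 t ∧ Q2 t = P2 t ∧ Q3 t = P3 t ∧
          Q4 t = P4 t ∧ Q5 t = P5 t ∧ Q6 t = P6 t := by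
  have hκ₀ : 0 < κ := hκ ▸ by positivity
  obtain ⟨P1, P2, P3, P4, P5, P6, hP⟩ :=
    exists_riccatiSystem m Im ιt Xmax hT.le hκ₀ hc2 hPen hα hσ hM
  exact ⟨P1, P2, P3, P4, P5, P6, hP, fun Q1 Q2 Q3 Q4 Q5 Q6 hQ => hQ.unique hα hσ hP⟩
end
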